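/- For every t > 0 and θ ∈ ℝ, the following explicit decomposition of ρ₀(θ,t) into ten pure product states holds: ρ₀(θ,t) = (1/4)·Σ_{j=1}^{4} |z₁(1, β_{1j}, γ_{1j})⟩⟨z₁(1, β_{1j}, γ_{1j})| + (1/(2t²))·(|z₂(i)⟩⟨z₂(i)| + |z₂(−i)⟩⟨z₂(−i)| + |z₃(1)⟩⟨z₃(1)| + |z₃(−1)⟩⟨z₃(−1)| + |z₄(e^{−3iθ/2})⟩⟨z₄(e^{−3iθ/2})| + |z₄(−e^{−3iθ/2})⟩⟨z₄(−e^{−3iθ/2})|), where (β₁₁, γ₁₁) = (ie^{iθ}, ie^{iθ/2}), (β₁₂, γ₁₂) = (−ie^{iθ}, ie^{iθ/2}), (β₁₃, γ₁₃) = (ie^{iθ}, −ie^{iθ/2}), (β₁₄, γ₁₄) = (−ie^{iθ}, −ie^{iθ/2}). -/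

import Mathlib

/-! Replacing a phase `β` by `-β` flips the sign of the part of `z(β)` that is odd in `β`, so
`|z(β)⟩⟨z(β)| + |z(-β)⟩⟨z(-β)| = 2 (|u⟩⟨u| + |w⟩⟨w|)` for the even and odd parts `u`, `w` of `z(β)`;
for `z₁` this is applied to the two independent sign flips of `β₁ⱼ` and `γ₁ⱼ`. The even parts are
supported on the indices `{1,5,9}` and produce the `3 × 3` block of `ρ₀` there. The odd parts are
supported on the index pairs `{2,4}`, `{3,7}`, `{6,8}`; they give the rest of the diagonal, and the
phases are chosen so that their off-diagonal entries cancel between the `z₁`-family and `z₂`, `z₃`,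
`z₄`, e.g. on `{2,4}` the cancellation is `conj(β₁₁)² + e^{iθ} β₄² = 0` with `β₄ = e^{-3iθ/2}`. -/

open Complex Matrix BigOperators

/-- The tensor (Kronecker) product of two vectors in `ℂ³`, as a vector in `ℂ⁹`:
the component `ξ_i η_j` sits at index `3i + j` (0-based). -/
def kron (ξ η : Fin 3 → ℂ) : Fin 9 → ℂ :=
  fun k => ξ ⟨k.val / 3, by have := k.isLt; omega⟩ * η ⟨k.val % 3, by have := k.isLt; omega⟩

/-- `z₁(a₁,a₂,a₃) = (a₁,a₂,a₃) ⊗ (ā₁,ā₂,ā₃)`. -/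
noncomputable def z1 (a₁ a₂ a₃ : ℂ) : Fin 9 → ℂ :=
  kron ![a₁, a₂, a₃] ![starRingEnd ℂ a₁, starRingEnd ℂ a₂, starRingEnd ℂ a₃]

/-- `z₂(β) = (0, √t β, 1) ⊗ (0, √t β̄, t e^{iθ})`. -/
noncomputable def z2 (t θ : ℝ) (β : ℂ) : Fin 9 → ℂ :=
  kron ![0, (Real.sqrt t : ℂ) * β, 1]
       ![0, (Real.sqrt t : ℂ) * starRingEnd ℂ β, (t : ℂ) * exp (θ * I)]

/-- `z₃(β) = (1, 0, √t β) ⊗ (t e^{iθ}, 0, √t β̄)`. -/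
noncomputable def z3 (t θ : ℝ) (β : ℂ) : Fin 9 → ℂ :=
  kron ![1, 0, (Real.sqrt t : ℂ) * β]
       ![(t : ℂ) * exp (θ * I), 0, (Real.sqrt t : ℂ) * starRingEnd ℂ β]

/-- `z₄(β) = (√t β, 1, 0) ⊗ (√t β̄, t e^{iθ}, 0)`. -/
noncomputable def z4 (t θ : ℝ) (β : ℂ) : Fin 9 → ℂ :=
  kron ![(Real.sqrt t : ℂ) * β, 1, 0]
       ![(Real.sqrt t : ℂ) * starRingEnd ℂ β, (t : ℂ) * exp (θ * I), 0]

/-- The pure (unnormalized) state `|z⟩⟨z|`. -/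
noncomputable def rank1 (v : Fin 9 → ℂ) : Matrix (Fin 9) (Fin 9) ℂ :=
  vecMulVec v (star v)

/-- The separable state `ρ₀(θ,t)`. -/
noncomputable def rho0 (θ t : ℝ) : Matrix (Fin 9) (Fin 9) ℂ :=
  !![3, 0, 0, 0, 1 + exp (-θ * I), 0, 0, 0, 1 + exp (θ * I);
     0, 1 + (t : ℂ), 0, 0, 0, 0, 0, 0, 0;
     0, 0, 1 + 1 / (t : ℂ), 0, 0, 0, 0, 0, 0;
     0, 0, 0, 1 + 1 / (t : ℂ), 0, 0, 0, 0, 0;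
     1 + exp (θ * I), 0, 0, 0, 3, 0, 0, 0, 1 + exp (-θ * I);
     0, 0, 0, 0, 0, 1 + (t : ℂ), 0, 0, 0;
     0, 0, 0, 0, 0, 0, 1 + (t : ℂ), 0, 0;
     0, 0, 0, 0, 0, 0, 0, 1 + 1 / (t : ℂ), 0;
     1 + exp (-θ * I), 0, 0, 0, 1 + exp (θ * I), 0, 0, 0, 3]

open ComplexConjugate

theorem vecMulVec_add_add_vecMulVec_sub {n α : Type*} [Ring α] [StarRing α] (u w : n → α) :
    vecMulVec (u + w) (star (u + w)) + vecMulVec (u - w) (star (u - w)) =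
      2 • (vecMulVec u (star u) + vecMulVec w (star w)) := by
  ext i j
  simp only [Matrix.add_apply, vecMulVec_apply, Pi.add_apply, Pi.sub_apply, star_add, star_sub,
    Matrix.smul_apply]
  noncomm_ring

theorem rank1_add_add_rank1_sub (u w : Fin 9 → ℂ) :
    rank1 (u + w) + rank1 (u - w) = 2 • (rank1 u + rank1 w) :=
  vecMulVec_add_add_vecMulVec_sub u w

theorem ofReal_sqrt_mul_self {t : ℝ} (ht : 0 ≤ t) : (√t : ℂ) * √t = t := by
  exact_mod_cast Real.mul_self_sqrt ht

theorem rank1_z2_add_rank1_z2_neg {t : ℝ} (ht : 0 ≤ t) (θ : ℝ) {β : ℂ}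
    (hβ : ‖β‖ = 1) :
    rank1 (z2 t θ β) + rank1 (z2 t θ (-β)) =
      2 • (rank1 ![0, 0, 0, 0, t, 0, 0, 0, t * exp (θ * I)]
        + rank1 ![0, 0, 0, 0, 0, √t * t * exp (θ * I) * β, 0, √t * conj β, 0]) := by
  rw [← rank1_add_add_rank1_sub]
  congr 2 <;> ext k <;> fin_cases k <;>
    simp [z2, kron, mul_mul_mul_comm _ β, ofReal_sqrt_mul_self ht, mul_conj', hβ] <;> ring

theorem rank1_z3_add_rank1_z3_neg {t : ℝ} (ht : 0 ≤ t) (θ : ℝ) {β : ℂ}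
    (hβ : ‖β‖ = 1) :
    rank1 (z3 t θ β) + rank1 (z3 t θ (-β)) =
      2 • (rank1 ![t * exp (θ * I), 0, 0, 0, 0, 0, 0, 0, t]
        + rank1 ![0, 0, √t * conj β, 0, 0, 0, √t * t * exp (θ * I) * β, 0, 0]) := by
  rw [← rank1_add_add_rank1_sub]
  congr 2 <;> ext k <;> fin_cases k <;>
    simp [z3, kron, mul_mul_mul_comm _ β, ofReal_sqrt_mul_self ht, mul_conj', hβ] <;> ring

theorem rank1_z4_add_rank1_z4_neg {t : ℝ} (ht : 0 ≤ t) (θ : ℝ) {β : ℂ}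
    (hβ : ‖β‖ = 1) :
    rank1 (z4 t θ β) + rank1 (z4 t θ (-β)) =
      2 • (rank1 ![t, 0, 0, 0, t * exp (θ * I), 0, 0, 0, 0]
        + rank1 ![0, √t * t * exp (θ * I) * β, 0, √t * conj β, 0, 0, 0, 0, 0]) := by
  rw [← rank1_add_add_rank1_sub]
  congr 2 <;> ext k <;> fin_cases k <;>
    simp [z4, kron, mul_mul_mul_comm _ β, ofReal_sqrt_mul_self ht, mul_conj', hβ] <;> ring

theorem sum_rank1_z1_sign_flips {b c : ℂ} (hb : ‖b‖ = 1) (hc : ‖c‖ = 1) :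
    rank1 (z1 1 b c) + rank1 (z1 1 (-b) c) + rank1 (z1 1 b (-c)) + rank1 (z1 1 (-b) (-c)) =
      4 • (rank1 ![1, 0, 0, 0, 1, 0, 0, 0, 1] + rank1 ![0, conj b, 0, b, 0, 0, 0, 0, 0]
        + rank1 ![0, 0, conj c, 0, 0, 0, c, 0, 0]
        + rank1 ![0, 0, 0, 0, 0, b * conj c, 0, c * conj b, 0]) := by
  set p : Fin 9 → ℂ := ![1, 0, 0, 0, 1, 0, 0, 0, 1]
  set q : Fin 9 → ℂ := ![0, conj b, 0, b, 0, 0, 0, 0, 0]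
  set r : Fin 9 → ℂ := ![0, 0, conj c, 0, 0, 0, c, 0, 0]
  set m : Fin 9 → ℂ := ![0, 0, 0, 0, 0, b * conj c, 0, c * conj b, 0]
  obtain ⟨hpp, hpm, hmp, hmm⟩ : z1 1 b c = (p + q) + (r + m) ∧ z1 1 b (-c) = (p + q) - (r + m) ∧
      z1 1 (-b) c = (p - q) + (r - m) ∧ z1 1 (-b) (-c) = (p - q) - (r - m) := by
    refine ⟨?_, ?_, ?_, ?_⟩ <;> ext k <;> fin_cases k <;>
      simp [z1, kron, p, q, r, m, mul_conj', hb, hc]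
  rw [hpp, hpm, hmp, hmm]
  calc _ = (rank1 ((p + q) + (r + m)) + rank1 ((p + q) - (r + m)))
        + (rank1 ((p - q) + (r - m)) + rank1 ((p - q) - (r - m))) := by abel
    _ = 2 • ((rank1 (p + q) + rank1 (p - q)) + (rank1 (r + m) + rank1 (r - m))) := by
      rw [rank1_add_add_rank1_sub, rank1_add_add_rank1_sub]; abel
    _ = 4 • (rank1 p + rank1 q + rank1 r + rank1 m) := by
      rw [rank1_add_add_rank1_sub, rank1_add_add_rank1_sub]; abel

/-- The explicit decomposition of `ρ₀(θ,t)` into ten pure product states. -/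
theorem rho0_ten_term_decomposition (t θ : ℝ) (ht : 0 < t) :
    rho0 θ t =
      (1 / 4 : ℂ) •
        (rank1 (z1 1 (I * exp (θ * I)) (I * exp ((θ / 2 : ℝ) * I)))
         + rank1 (z1 1 (-(I * exp (θ * I))) (I * exp ((θ / 2 : ℝ) * I)))
         + rank1 (z1 1 (I * exp (θ * I)) (-(I * exp ((θ / 2 : ℝ) * I))))
         + rank1 (z1 1 (-(I * exp (θ * I))) (-(I * exp ((θ / 2 : ℝ) * I)))))
      + (1 / (2 * (t : ℂ) ^ 2)) •
        (rank1 (z2 t θ I) + rank1 (z2 t θ (-I))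
         + rank1 (z3 t θ 1) + rank1 (z3 t θ (-1))
         + rank1 (z4 t θ (exp (-(3 * θ / 2 : ℝ) * I)))
         + rank1 (z4 t θ (-exp (-(3 * θ / 2 : ℝ) * I)))) := by
  have hunit (x : ℝ) : ‖I * exp (x * I)‖ = 1 := by simp [norm_exp_ofReal_mul_I]
  rw [sum_rank1_z1_sign_flips (hunit θ) (hunit (θ / 2)), add_assoc _ (rank1 (z3 t θ 1)),
    add_assoc _ (rank1 (z4 t θ _)), rank1_z2_add_rank1_z2_neg ht.le θ (by simp),
    rank1_z3_add_rank1_z3_neg ht.le θ (by simp),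
    rank1_z4_add_rank1_z4_neg ht.le θ (by simp [norm_exp])]
  -- every phase is a power of the half-angle phase `e`
  set e := exp ((θ / 2 : ℝ) * I)
  have hE : exp (θ * I) = e ^ 2 := by rw [← exp_nat_mul]; push_cast; ring_nf
  have hE' : exp (-θ * I) = (e ^ 2)⁻¹ := by rw [← hE, ← exp_neg]; ring_nf
  have hβ₄ : exp (-(3 * θ / 2 : ℝ) * I) = (e ^ 3)⁻¹ := by
    rw [← exp_nat_mul, ← exp_neg]; push_cast; ring_nf
  have he : conj e = e⁻¹ := by rw [← exp_conj, ← exp_neg, map_mul, conj_ofReal, conj_I]; ring_nf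
  have hs : (√t : ℂ) ^ 2 = t := by rw [sq, ofReal_sqrt_mul_self ht.le]
  have ht0 : (t : ℂ) ≠ 0 := by exact_mod_cast ht.ne'
  have he0 : e ≠ 0 := exp_ne_zero _
  rw [rho0, hE, hE', hβ₄]
  ext i j
  fin_cases i <;> fin_cases j <;>
    simp only [rank1, Matrix.add_apply, Matrix.smul_apply, vecMulVec_apply, Pi.star_apply,
      of_apply, cons_val', cons_val_zero, cons_val_one, empty_val', cons_val_fin_one, cons_val,
      Fin.reduceFinMk, Fin.isValue, star_def, map_mul, map_pow, map_one, map_zero, map_neg,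
      map_inv₀, conj_I, conj_ofReal, he, smul_eq_mul] <;>
    simp only [nsmul_eq_mul]
  all_goals field_simp
  all_goals ring_nf
  all_goals simp only [hs, I_sq, I_pow_four]
  all_goals ring_nf
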